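/- Let a < b, ε > 0, and u ∈ C²([a,b]) with 0 ≤ u ≤ 1/4. For all x, y ∈ [a,b], |(ε²/2)u'(x)² - F(u(x)) - ((ε²/2)u'(y)² - F(u(y)))| ≤ ε · ‖u'‖_{L²(a,b)} · (∫_a^b (ε u'' - (1/ε)F'(u))² dt)^{1/2}, where F(s) = s²/2 - 2s³. -/

import Mathlib

/-!
The discrepancy `Φ = (ε²/2) u'² - F(u)` has derivative `u' (ε² u'' - F'(u)) = ε u' (ε u'' - F'(u)/ε)`,
so `Φ(x) - Φ(y)` is the integral of this product over `[y, x]`; bounding it by the integral of the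
absolute value over `[a, b]` and applying Cauchy–Schwarz gives the estimate.
-/

open MeasureTheory Set

theorem integral_abs_mul_abs_le_sqrt_mul_sqrt {α : Type*} [MeasurableSpace α] {μ : Measure α}
    {f g : α → ℝ} (hf : MemLp f 2 μ) (hg : MemLp g 2 μ) :
    ∫ x, |f x| * |g x| ∂μ ≤ √(∫ x, f x ^ 2 ∂μ) * √(∫ x, g x ^ 2 ∂μ) := by
  have h := integral_mul_norm_le_Lp_mul_Lq (f := f) (g := g) Real.HolderConjugate.two_two
    (by rwa [ENNReal.ofReal_ofNat]) (by rwa [ENNReal.ofReal_ofNat])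
  simpa only [Real.norm_eq_abs, Real.rpow_two, sq_abs, Real.sqrt_eq_rpow] using h

theorem abs_intervalIntegral_mul_le_sqrt_mul_sqrt {a b x y : ℝ} {f g : ℝ → ℝ}
    (hf : MemLp f 2 (volume.restrict (Ioc a b))) (hg : MemLp g 2 (volume.restrict (Ioc a b)))
    (hx : x ∈ Icc a b) (hy : y ∈ Icc a b) :
    |∫ t in y..x, f t * g t| ≤ √(∫ t in a..b, f t ^ 2) * √(∫ t in a..b, g t ^ 2) := by
  have hab : a ≤ b := hx.1.trans hx.2
  have hsub : uIoc y x ⊆ Ioc a b := Ioc_subset_Ioc (le_min hy.1 hx.1) (max_le hy.2 hx.2)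
  rw [intervalIntegral.integral_of_le hab, intervalIntegral.integral_of_le hab]
  calc |∫ t in y..x, f t * g t|
      ≤ ∫ t in uIoc y x, |f t| * |g t| := by
        simpa only [Real.norm_eq_abs, abs_mul] using
          intervalIntegral.norm_integral_le_integral_norm_uIoc (f := fun t => f t * g t)
    _ ≤ ∫ t in Ioc a b, |f t| * |g t| :=
        setIntegral_mono_set (hf.abs.integrable_mul hg.abs)
          (Filter.Eventually.of_forall fun t => by positivity) hsub.eventuallyLE
    _ ≤ _ := integral_abs_mul_abs_le_sqrt_mul_sqrt hf hg

noncomputable def discrepancy (ε : ℝ) (u F : ℝ → ℝ) (t : ℝ) : ℝ :=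
  ε ^ 2 / 2 * deriv u t ^ 2 - F (u t)

theorem hasDerivAt_discrepancy {ε t : ℝ} {u F : ℝ → ℝ} (hu : DifferentiableAt ℝ u t)
    (hu' : DifferentiableAt ℝ (deriv u) t) (hF : DifferentiableAt ℝ F (u t)) :
    HasDerivAt (discrepancy ε u F)
      (deriv u t * (ε ^ 2 * deriv (deriv u) t - deriv F (u t))) t := by
  have h := ((hu'.hasDerivAt.fun_pow 2).const_mul (ε ^ 2 / 2)).fun_sub
    (hF.hasDerivAt.comp t hu.hasDerivAt)
  exact h.congr_deriv (by push_cast; ring)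

theorem abs_sub_discrepancy_le {a b ε x y : ℝ} {u F : ℝ → ℝ} (hε : 0 < ε)
    (hu : ContDiff ℝ 2 u) (hF : ContDiff ℝ 1 F) (hx : x ∈ Icc a b) (hy : y ∈ Icc a b) :
    |discrepancy ε u F x - discrepancy ε u F y| ≤
      ε * √(∫ t in a..b, deriv u t ^ 2) *
        √(∫ t in a..b, (ε * iteratedDeriv 2 u t - 1 / ε * deriv F (u t)) ^ 2) := by
  obtain ⟨hu_diff, -, hu'⟩ := contDiff_succ_iff_deriv.mp (show ContDiff ℝ (1 + 1) u from hu)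
  obtain ⟨hF_diff, -, hF'⟩ := contDiff_succ_iff_deriv.mp (show ContDiff ℝ (0 + 1) F from hF)
  have hu'' : iteratedDeriv 2 u = deriv (deriv u) := by rw [iteratedDeriv_succ, iteratedDeriv_one]
  set g := fun t => ε * iteratedDeriv 2 u t - 1 / ε * deriv F (u t)
  have hg : Continuous g := by
    have := hu'.continuous_deriv le_rfl
    have := hF'.continuous
    simp only [g, hu'']
    fun_prop
  have hderiv : ∀ t, HasDerivAt (discrepancy ε u F) (ε * (deriv u t * g t)) t := by
    intro t
    convert hasDerivAt_discrepancy (ε := ε) (hu_diff t) (hu'.differentiable one_ne_zero t)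
      (hF_diff (u t)) using 1
    simp only [g, hu'']
    field_simp
  have hmemLp : ∀ {h : ℝ → ℝ}, Continuous h → MemLp h 2 (volume.restrict (Ioc a b)) :=
    fun hh => (memLp_two_iff_integrable_sq hh.aestronglyMeasurable).2 (hh.pow 2).integrableOn_Ioc
  rw [← intervalIntegral.integral_eq_sub_of_hasDerivAt (fun t _ => hderiv t)
    (((hu'.continuous.mul hg).const_mul ε).intervalIntegrable _ _),
    intervalIntegral.integral_const_mul, abs_mul, abs_of_pos hε, mul_assoc]
  exact mul_le_mul_of_nonneg_left
    (abs_intervalIntegral_mul_le_sqrt_mul_sqrt (hmemLp hu'.continuous) (hmemLp hg) hx hy) hε.le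

theorem stmt10_general (a b ε : ℝ) (hε : 0 < ε)
    (u F : ℝ → ℝ) (hu : ContDiff ℝ 2 u)
    (hF : ∀ s, F s = s^2/2 - 2*s^3) :
    ∀ x ∈ Set.Icc a b, ∀ y ∈ Set.Icc a b,
      |((ε^2/2) * (deriv u x)^2 - F (u x)) - ((ε^2/2) * (deriv u y)^2 - F (u y))| ≤
        ε * Real.sqrt (∫ t in a..b, (deriv u t)^2) *
          Real.sqrt (∫ t in a..b, (ε * iteratedDeriv 2 u t - (1/ε) * deriv F (u t))^2) := by
  intro x hx y hy
  have hF_smooth : ContDiff ℝ 1 F := by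
    rw [funext hF]
    fun_prop
  exact abs_sub_discrepancy_le hε hu hF_smooth hx hy

theorem stmt10 (a b ε : ℝ) (hab : a < b) (hε : 0 < ε)
    (u F : ℝ → ℝ) (hu : ContDiff ℝ 2 u)
    (hrange : ∀ x ∈ Set.Icc a b, u x ∈ Set.Icc (0:ℝ) (1/4))
    (hF : ∀ s, F s = s^2/2 - 2*s^3) :
    ∀ x ∈ Set.Icc a b, ∀ y ∈ Set.Icc a b,
      |((ε^2/2) * (deriv u x)^2 - F (u x)) - ((ε^2/2) * (deriv u y)^2 - F (u y))| ≤
        ε * Real.sqrt (∫ t in a..b, (deriv u t)^2) *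
          Real.sqrt (∫ t in a..b, (ε * iteratedDeriv 2 u t - (1/ε) * deriv F (u t))^2) :=
  stmt10_general a b ε hε u F hu hF
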